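/- Let H be a hypothesis class and P a probability distribution over X×Y with marginal D over X. For every probability distribution ρ over H, the Gibbs risk decomposes as R_P(G_ρ) = (1/2)·R_D(G_ρ,G_ρ) + e_P(G_ρ,G_ρ). -/

import Mathlib

open MeasureTheory
open scoped ENNReal

noncomputable section

variable {H X : Type*} [MeasurableSpace H] [MeasurableSpace X]

/-- Disagreement indicator `1[h(x) ≠ h'(x)]` for a pair of classifiers. -/
def dAgree (f : H → X → Bool) (hh : H × H) (x : X) : ℝ :=
  if f hh.1 x = f hh.2 x then 0 else 1

/-- Expected disagreement `R_D(Gρ,Gρ) = E_{(h,h')∼ρ×ρ} E_{x∼D} 1[h(x)≠h'(x)]`. -/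
def expDis (f : H → X → Bool) (ρ : Measure H) (D : Measure X) : ℝ :=
  ∫ hh : H × H, ∫ x, dAgree f hh x ∂D ∂(ρ.prod ρ)

/-- Empirical disagreement `(1/m) Σ_i E_{(h,h')∼ρ×ρ} 1[h(x_i)≠h'(x_i)]`. -/
def empDis (f : H → X → Bool) (ρ : Measure H) {m : ℕ} (s : Fin m → X) : ℝ :=
  (1 / (m : ℝ)) * ∑ i, ∫ hh : H × H, dAgree f hh (s i) ∂(ρ.prod ρ)

/-- Kullback-Leibler divergence `KL(ρ‖π) = E_{h∼ρ} ln (dρ/dπ (h))`. -/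
def KLd (ρ π : Measure H) : ℝ := ∫ h, Real.log ((ρ.rnDeriv π h).toReal) ∂ρ

/-- Error indicator `1[h(x) ≠ y]` on a labeled example. -/
def errInd (f : H → X → Bool) (h : H) (z : X × Bool) : ℝ :=
  if f h z.1 = z.2 then 0 else 1

/-- Gibbs risk `R_P(Gρ) = E_{h∼ρ} E_{(x,y)∼P} 1[h(x)≠y]`. -/
def gibbsRisk (f : H → X → Bool) (ρ : Measure H) (P : Measure (X × Bool)) : ℝ :=
  ∫ h, ∫ z, errInd f h z ∂P ∂ρ

/-- Expected joint error `e_P(Gρ,Gρ) = E_{(h,h')∼ρ×ρ} E_{(x,y)∼P} 1[h(x)≠y]·1[h'(x)≠y]`. -/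
def jointErr (f : H → X → Bool) (ρ : Measure H) (P : Measure (X × Bool)) : ℝ :=
  ∫ hh : H × H, ∫ z, errInd f hh.1 z * errInd f hh.2 z ∂P ∂(ρ.prod ρ)

/-- Empirical Gibbs risk `(1/m) Σ_i E_{h∼ρ} 1[h(x_i)≠y_i]`. -/
def empGibbs (f : H → X → Bool) (ρ : Measure H) {m : ℕ} (s : Fin m → X × Bool) : ℝ :=
  (1 / (m : ℝ)) * ∑ i, ∫ h, errInd f h (s i) ∂ρ

/-! For binary labels, `1[h(x) ≠ y] + 1[h'(x) ≠ y] = 1[h(x) ≠ h'(x)] + 2·1[h(x) ≠ y]·1[h'(x) ≠ y]`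
pointwise: if `h` and `h'` disagree exactly one of them errs, and if they agree both or neither do.
Integrating against `(ρ × ρ) × P`, each term on the left integrates to `R_P(Gρ)` because `ρ` is a
probability measure, and the right integrates to `R_D(Gρ,Gρ) + 2 e_P(Gρ,Gρ)`. -/

section

omit [MeasurableSpace H] [MeasurableSpace X]

variable (f : H → X → Bool)

lemma errInd_add_errInd (hh : H × H) (z : X × Bool) :
    errInd f hh.1 z + errInd f hh.2 z
      = dAgree f hh z.1 + 2 * (errInd f hh.1 z * errInd f hh.2 z) := by
  obtain ⟨x, y⟩ := z
  simp only [dAgree, errInd]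
  cases f hh.1 x <;> cases f hh.2 x <;> cases y <;> norm_num

lemma norm_errInd_le_one (h : H) (z : X × Bool) : ‖errInd f h z‖ ≤ 1 := by
  unfold errInd; split_ifs <;> simp

lemma norm_dAgree_le_one (hh : H × H) (x : X) : ‖dAgree f hh x‖ ≤ 1 := by
  unfold dAgree; split_ifs <;> simp

end

section

variable {f : H → X → Bool} (hf : Measurable (Function.uncurry f))
include hf

lemma measurable_errInd : Measurable fun p : H × (X × Bool) => errInd f p.1 p.2 :=
  Measurable.ite
    (measurableSet_eq_fun (hf.comp (measurable_fst.prodMk measurable_snd.fst)) measurable_snd.snd)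
    measurable_const measurable_const

lemma measurable_dAgree : Measurable fun p : (H × H) × X => dAgree f p.1 p.2 :=
  Measurable.ite
    (measurableSet_eq_fun (hf.comp (measurable_fst.fst.prodMk measurable_snd))
      (hf.comp (measurable_fst.snd.prodMk measurable_snd)))
    measurable_const measurable_const

lemma integrable_errInd_comp {α : Type*} [MeasurableSpace α] {μ : Measure α} [IsFiniteMeasure μ]
    {a : α → H} {z : α → X × Bool} (ha : Measurable a) (hz : Measurable z) :
    Integrable (fun p => errInd f (a p) (z p)) μ :=
  .of_bound ((measurable_errInd hf).comp (ha.prodMk hz)).aestronglyMeasurable 1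
    (ae_of_all _ fun _ => norm_errInd_le_one f _ _)

lemma integrable_dAgree_comp {α : Type*} [MeasurableSpace α] {μ : Measure α} [IsFiniteMeasure μ]
    {g : α → H × H} {x : α → X} (hg : Measurable g) (hx : Measurable x) :
    Integrable (fun p => dAgree f (g p) (x p)) μ :=
  .of_bound ((measurable_dAgree hf).comp (hg.prodMk hx)).aestronglyMeasurable 1
    (ae_of_all _ fun _ => norm_dAgree_le_one f _ _)

lemma integrable_errInd_mul_errInd {μ : Measure ((H × H) × (X × Bool))} [IsFiniteMeasure μ] :
    Integrable (fun p => errInd f p.1.1 p.2 * errInd f p.1.2 p.2) μ :=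
  (integrable_errInd_comp hf measurable_fst.snd measurable_snd).bdd_mul
    (integrable_errInd_comp hf measurable_fst.fst measurable_snd).aestronglyMeasurable
    (ae_of_all _ fun _ => norm_errInd_le_one f _ _)

lemma integral_errInd_add_integral_errInd {μ : Measure ((H × H) × (X × Bool))} [IsFiniteMeasure μ] :
    ∫ p, errInd f p.1.1 p.2 ∂μ + ∫ p, errInd f p.1.2 p.2 ∂μ
      = ∫ p, dAgree f p.1 p.2.1 ∂μ + 2 * ∫ p, errInd f p.1.1 p.2 * errInd f p.1.2 p.2 ∂μ := by
  rw [← integral_add (integrable_errInd_comp hf (by fun_prop) (by fun_prop))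
      (integrable_errInd_comp hf (by fun_prop) (by fun_prop)),
    ← integral_const_mul, ← integral_add (integrable_dAgree_comp hf (by fun_prop) (by fun_prop))
      ((integrable_errInd_mul_errInd hf).const_mul 2)]
  exact integral_congr_ae (ae_of_all _ fun p => errInd_add_errInd f p.1 p.2)

variable {P : Measure (X × Bool)} [IsFiniteMeasure P] {ρ : Measure H}

lemma gibbsRisk_eq_integral_fst [IsProbabilityMeasure ρ] :
    gibbsRisk f ρ P = ∫ p, errInd f p.1.1 p.2 ∂((ρ.prod ρ).prod P) := by
  rw [integral_prod _ (integrable_errInd_comp hf (by fun_prop) (by fun_prop)),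
    integral_fun_fst (fun h => ∫ z, errInd f h z ∂P)]
  simp [gibbsRisk]

lemma gibbsRisk_eq_integral_snd [IsProbabilityMeasure ρ] :
    gibbsRisk f ρ P = ∫ p, errInd f p.1.2 p.2 ∂((ρ.prod ρ).prod P) := by
  rw [integral_prod _ (integrable_errInd_comp hf (by fun_prop) (by fun_prop)),
    integral_fun_snd (fun h => ∫ z, errInd f h z ∂P)]
  simp [gibbsRisk]

lemma expDis_map_fst_eq_integral [IsFiniteMeasure ρ] :
    expDis f ρ (P.map Prod.fst) = ∫ p, dAgree f p.1 p.2.1 ∂((ρ.prod ρ).prod P) := by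
  rw [integral_prod _ (integrable_dAgree_comp hf (by fun_prop) (by fun_prop))]
  refine integral_congr_ae (ae_of_all _ fun hh => ?_)
  exact integral_map measurable_fst.aemeasurable
    ((measurable_dAgree hf).comp measurable_prodMk_left).aestronglyMeasurable

lemma jointErr_eq_integral [IsFiniteMeasure ρ] :
    jointErr f ρ P
      = ∫ p, errInd f p.1.1 p.2 * errInd f p.1.2 p.2 ∂((ρ.prod ρ).prod P) :=
  (integral_prod _ (integrable_errInd_mul_errInd hf)).symm

end

/-- Gibbs risk decomposition: `R_P(Gρ) = (1/2) R_D(Gρ,Gρ) + e_P(Gρ,Gρ)`,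
where `D` is the marginal of `P` over `X`. -/
theorem gibbs_risk_decomposition
    (f : H → X → Bool) (hf : Measurable (Function.uncurry f))
    (P : Measure (X × Bool)) [IsProbabilityMeasure P]
    (ρ : Measure H) [IsProbabilityMeasure ρ] :
    gibbsRisk f ρ P = (1 / 2) * expDis f ρ (P.map Prod.fst) + jointErr f ρ P := by
  have h := integral_errInd_add_integral_errInd hf (μ := (ρ.prod ρ).prod P)
  rw [← gibbsRisk_eq_integral_fst hf, ← gibbsRisk_eq_integral_snd hf,
    ← expDis_map_fst_eq_integral hf, ← jointErr_eq_integral hf] at h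
  linarith
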